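/- With 𝐀 and 𝐁 as above (right-action matrix of A and left-action matrix of B over F₂), the block matrices H_X = [𝐀 𝐁] and H_Z = [𝐁ᵀ 𝐀ᵀ] satisfy H_X · H_Zᵀ = 0 over F₂, i.e., the 2BGA construction yields a valid CSS code. -/
import Mathlib


/-- The 2BGA parity-check matrices `H_X = [𝐀 𝐁]` and `H_Z = [𝐁ᵀ 𝐀ᵀ]` satisfy
`H_X · H_Zᵀ = 0` over `F₂`: the construction yields a valid CSS code. -/
theorem twoBGA_css_condition {G : Type*} [Group G] [Fintype G] [DecidableEq G]
    (A B : Finset G)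
    (Amat Bmat : Matrix G G (ZMod 2))
    (hA : ∀ g h : G, Amat g h = ((A.filter (fun a => h = g * a)).card : ZMod 2))
    (hB : ∀ g h : G, Bmat g h = ((B.filter (fun b => h = b * g)).card : ZMod 2))
    (HX HZ : Matrix G (G ⊕ G) (ZMod 2))
    (hHX : HX = Matrix.of fun g => Sum.elim (Amat g) (Bmat g))
    (hHZ : HZ = Matrix.of fun g => Sum.elim (fun h => Bmat.transpose g h) (fun h => Amat.transpose g h)) :
    HX * HZ.transpose = 0 := by
  have hA' : ∀ g h : G, Amat g h = ∑ a ∈ A, if h = g * a then (1 : ZMod 2) else 0 := by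
    intro g h
    rw [hA, Finset.card_filter]
    push_cast
    rfl
  have hB' : ∀ g h : G, Bmat g h = ∑ b ∈ B, if h = b * g then (1 : ZMod 2) else 0 := by
    intro g h
    rw [hB, Finset.card_filter]
    push_cast
    rfl
  have key1 : ∀ g h : G, ∑ k, Amat g k * Bmat k h
      = ∑ a ∈ A, ∑ b ∈ B, if h = b * (g * a) then (1 : ZMod 2) else 0 := by
    intro g h
    calc ∑ k, Amat g k * Bmat k h
        = ∑ k, ∑ a ∈ A, ∑ b ∈ B,
            (if k = g * a then (1 : ZMod 2) else 0) * (if h = b * k then 1 else 0) := by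
          simp only [hA', hB', Finset.sum_mul, Finset.mul_sum]
          exact Finset.sum_congr rfl fun _ _ => Finset.sum_comm
      _ = ∑ a ∈ A, ∑ b ∈ B, ∑ k,
            (if k = g * a then (1 : ZMod 2) else 0) * (if h = b * k then 1 else 0) := by
          rw [Finset.sum_comm]
          exact Finset.sum_congr rfl fun _ _ => Finset.sum_comm
      _ = ∑ a ∈ A, ∑ b ∈ B, if h = b * (g * a) then (1 : ZMod 2) else 0 := by
          simp only [ite_mul, one_mul, zero_mul, Finset.sum_ite_eq', Finset.mem_univ,
            if_true]
  have key2 : ∀ g h : G, ∑ k, Bmat g k * Amat k h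
      = ∑ b ∈ B, ∑ a ∈ A, if h = b * g * a then (1 : ZMod 2) else 0 := by
    intro g h
    calc ∑ k, Bmat g k * Amat k h
        = ∑ k, ∑ b ∈ B, ∑ a ∈ A,
            (if k = b * g then (1 : ZMod 2) else 0) * (if h = k * a then 1 else 0) := by
          simp only [hA', hB', Finset.sum_mul, Finset.mul_sum]
          exact Finset.sum_congr rfl fun _ _ => Finset.sum_comm
      _ = ∑ b ∈ B, ∑ a ∈ A, ∑ k,
            (if k = b * g then (1 : ZMod 2) else 0) * (if h = k * a then 1 else 0) := by
          rw [Finset.sum_comm]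
          exact Finset.sum_congr rfl fun _ _ => Finset.sum_comm
      _ = ∑ b ∈ B, ∑ a ∈ A, if h = b * g * a then (1 : ZMod 2) else 0 := by
          simp only [ite_mul, one_mul, zero_mul, Finset.sum_ite_eq', Finset.mem_univ,
            if_true]
  ext g h
  simp only [hHX, hHZ, Matrix.mul_apply, Matrix.transpose_apply, Matrix.of_apply,
    Fintype.sum_sum_type, Sum.elim_inl, Sum.elim_inr, Matrix.zero_apply]
  rw [key1, key2, Finset.sum_comm (s := B)]
  simp only [mul_assoc]
  exact CharTwo.add_self_eq_zero _
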